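/- Let (M, C, T_l, T_r, Π, t, i) be an admissible septuple and w : T_r X → T_l X a transposition morphism, with associated para-cocyclic operators w_n := Π(T_l^n w) ∘ (t_n)_X ∘ i_{T_l^n X} on Z^n := Π(T_l^{n+1} X). Then for all n and 0 ≤ k ≤ n the coface d_k : Z^n → Z^{n+1} satisfies d_k ∘ (w_n)^{n+1} = (w_{n+1})^{n+2} ∘ d_k, and the codegeneracy s_k : Z^n → Z^{n-1} satisfies s_k ∘ (w_n)^{n+1} = (w_{n-1})^n ∘ s_k. Consequently, if for every n the coequalizer Ẑ^n of (w_n)^{n+1} and the identity of Z^n exists in C, then the maps d_k, s_k and w_n induce morphisms d̂_k, ŝ_k and ŵ_n on Ẑ^*, making Ẑ^* a cocyclic object (in particular (ŵ_n)^{n+1} = id). -/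

import Mathlib

/-!
The operator `w_n` is `i` followed by `Π` of the lift `W_n = T_lⁿ(w) ∘ t_n : T_r T_lⁿ X ⟶ T_lⁿ⁺¹ X`
of the transposition morphism. Pushing the axioms of the distributive law and of admissibility
through `W_n` gives the para-cocyclic relations
`w_{n+1} d_{k+1} = d_k w_n`, `w_{n+1} d_0 = d_{n+1}`, `w_n s_{k+1} = s_k w_{n+1}` and
`w_n s_0 = s_n w_{n+1}²`. Going once around the cycle, `k` of the first kind of relation slide
`d_k` down to `d_0`, the wrap-around relation turns it into `d_{n+1}`, and the remaining `n + 1 - k`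
slide it back to `d_k`; the same count for `s_k`, where the wrap-around contributes two extra
factors, gives the codegeneracy identity. These identities are exactly what is needed for `d_k`,
`s_k` and `w_n` to descend to the coequalizers of `(w_n)ⁿ⁺¹` and the identity, and there
`(ŵ_n)ⁿ⁺¹ = id` because `π ∘ (w_n)ⁿ⁺¹ = π` and `π` is epi.
-/

open CategoryTheory

universe v u v' u'

namespace Stmt5

variable {M : Type u} [Category.{v} M]

/-- `fpow T n X` is the `n`-fold application `Tⁿ X`. -/
def fpow (T : M ⥤ M) : ℕ → M → M
  | 0, X => X
  | n + 1, X => T.obj (fpow T n X)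

/-- `coface T u X n k` represents the coface `d_k = Tᵏ (u_{T^{n-k} X}) : Tⁿ X ⟶ Tⁿ⁺¹ X`
(meaningful for `k ≤ n`). -/
def coface (T : M ⥤ M) (u : 𝟭 M ⟶ T) (X : M) : (n k : ℕ) → (fpow T n X ⟶ fpow T (n + 1) X)
  | n, 0 => u.app (fpow T n X)
  | n + 1, k + 1 => T.map (coface T u X n k)
  | 0, _ + 1 => u.app X

/-- `codeg T m X n k` represents the codegeneracy `s_k = Tᵏ (m_{T^{n-k} X}) : Tⁿ⁺² X ⟶ Tⁿ⁺¹ X`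
(meaningful for `k ≤ n`). -/
def codeg (T : M ⥤ M) (m : T ⋙ T ⟶ T) (X : M) : (n k : ℕ) → (fpow T (n + 2) X ⟶ fpow T (n + 1) X)
  | n, 0 => m.app (fpow T n X)
  | n + 1, k + 1 => T.map (codeg T m X n k)
  | 0, _ + 1 => m.app X

/-- The lifted distributive law
`t_n = T_l^{n-1} t ∘ ⋯ ∘ t T_l^{n-1} : T_r T_l^n X ⟶ T_l^n T_r X`. -/
def distIter (Tl Tr : M ⥤ M) (t : Tl ⋙ Tr ⟶ Tr ⋙ Tl) (X : M) :
    (n : ℕ) → (Tr.obj (fpow Tl n X) ⟶ fpow Tl n (Tr.obj X))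
  | 0 => 𝟙 (Tr.obj X)
  | n + 1 => t.app (fpow Tl n X) ≫ Tl.map (distIter Tl Tr t X n)

/-- `T_l^n w : T_l^n Y ⟶ T_l^{n+1} X` for `w : Y ⟶ T_l X`. -/
def transIter (T : M ⥤ M) {X Y : M} (w : Y ⟶ T.obj X) : (n : ℕ) → (fpow T n Y ⟶ fpow T (n + 1) X)
  | 0 => w
  | n + 1 => T.map (transIter T w n)

variable {C : Type u'} [Category.{v'} C]

/-- The para-cocyclic operator `w_n := Π(T_l^n w) ∘ (t_n)_X ∘ i_{T_l^n X}`. -/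
def paraOp (Tl Tr : M ⥤ M) (t : Tl ⋙ Tr ⟶ Tr ⋙ Tl) (P : M ⥤ C) (i : Tl ⋙ P ⟶ Tr ⋙ P)
    {X : M} (w : Tr.obj X ⟶ Tl.obj X) (n : ℕ) :
    P.obj (fpow Tl (n + 1) X) ⟶ P.obj (fpow Tl (n + 1) X) :=
  i.app (fpow Tl n X) ≫ P.map (distIter Tl Tr t X n ≫ transIter Tl w n)


/-- Iterated composition `g^n` of an endomorphism. -/
def iterComp {D : Type u'} [Category.{v'} D] {Z : D} (g : Z ⟶ Z) : ℕ → (Z ⟶ Z)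
  | 0 => 𝟙 Z
  | n + 1 => g ≫ iterComp g n

theorem coface_zero (T : M ⥤ M) (u : 𝟭 M ⟶ T) (X : M) (n : ℕ) :
    coface T u X n 0 = u.app (fpow T n X) := by
  cases n <;> rfl

theorem codeg_zero (T : M ⥤ M) (m : T ⋙ T ⟶ T) (X : M) (n : ℕ) :
    codeg T m X n 0 = m.app (fpow T n X) := by
  cases n <;> rfl

theorem NatTrans.map_map_app_comp_map_of_comp_eq {M' D E : Type*} [Category M'] [Category D]
    [Category E] {F : M ⥤ M'} {G : M' ⥤ D} {H : M ⥤ E} {K : E ⥤ D} (α : F ⋙ G ⟶ H ⋙ K)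
    {A B Y Z : _} {d : A ⟶ B} {W : H.obj B ⟶ Z} {W' : H.obj A ⟶ Y} {d' : Y ⟶ Z}
    (h : H.map d ≫ W = W' ≫ d') :
    G.map (F.map d) ≫ α.app B ≫ K.map W = (α.app A ≫ K.map W') ≫ K.map d' := by
  have := α.naturality_assoc d (K.map W)
  simp only [Functor.comp_map] at this
  rw [this, Category.assoc, ← K.map_comp, h, K.map_comp]

section DistributiveLaw

variable {Tl Tr : M ⥤ M} {t : Tl ⋙ Tr ⟶ Tr ⋙ Tl} {A Y Z : M}

theorem distLaw_map_unit_comp {ul : 𝟭 M ⟶ Tl}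
    (ht₄ : ∀ X : M, Tr.map (ul.app X) ≫ t.app X = ul.app (Tr.obj X)) (W : Tr.obj A ⟶ Z) :
    Tr.map (ul.app A) ≫ t.app A ≫ Tl.map W = W ≫ ul.app Z := by
  rw [← Category.assoc, ht₄]
  exact (ul.naturality W).symm

theorem distLaw_map_mul_comp {ml : Tl ⋙ Tl ⟶ Tl}
    (ht₂ : ∀ X : M, Tr.map (ml.app X) ≫ t.app X =
      t.app (Tl.obj X) ≫ Tl.map (t.app X) ≫ ml.app (Tr.obj X)) (W : Tr.obj A ⟶ Z) :
    Tr.map (ml.app A) ≫ t.app A ≫ Tl.map W =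
      (t.app (Tl.obj A) ≫ Tl.map (t.app A ≫ Tl.map W)) ≫ ml.app Z := by
  have := ml.naturality W
  simp only [Functor.comp_map] at this
  rw [← Category.assoc, ht₂]
  simp only [Category.assoc, this, Functor.map_comp]

theorem distLaw_unit_comp {ur : 𝟭 M ⟶ Tr}
    (ht₃ : ∀ X : M, ur.app (Tl.obj X) ≫ t.app X = Tl.map (ur.app X)) (W : Tr.obj A ⟶ Z) :
    ur.app (Tl.obj A) ≫ t.app A ≫ Tl.map W = Tl.map (ur.app A ≫ W) := by
  rw [← Category.assoc, ht₃, Tl.map_comp]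

theorem distLaw_mul_comp {mr : Tr ⋙ Tr ⟶ Tr}
    (ht₁ : ∀ X : M, mr.app (Tl.obj X) ≫ t.app X =
      Tr.map (t.app X) ≫ t.app (Tr.obj X) ≫ Tl.map (mr.app X))
    {W : Tr.obj A ⟶ Y} {W' : Tr.obj Y ⟶ Z} {c : Z ⟶ Y}
    (h : mr.app A ≫ W = Tr.map W ≫ W' ≫ c) :
    mr.app (Tl.obj A) ≫ t.app A ≫ Tl.map W =
      Tr.map (t.app A ≫ Tl.map W) ≫ (t.app Y ≫ Tl.map W') ≫ Tl.map c := by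
  have := t.naturality_assoc W (Tl.map W' ≫ Tl.map c)
  simp only [Functor.comp_map] at this
  rw [← Category.assoc, ht₁, Category.assoc, Category.assoc, ← Tl.map_comp, h]
  simp only [Functor.map_comp, Category.assoc, this]

def transpLift (Tl Tr : M ⥤ M) (t : Tl ⋙ Tr ⟶ Tr ⋙ Tl) {X : M} (w : Tr.obj X ⟶ Tl.obj X) :
    (n : ℕ) → (Tr.obj (fpow Tl n X) ⟶ fpow Tl (n + 1) X)
  | 0 => w
  | n + 1 => t.app (fpow Tl n X) ≫ Tl.map (transpLift Tl Tr t w n)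

variable {X : M} {w : Tr.obj X ⟶ Tl.obj X}

theorem distIter_comp_transIter :
    ∀ n, distIter Tl Tr t X n ≫ transIter Tl w n = transpLift Tl Tr t w n
  | 0 => Category.id_comp w
  | n + 1 => by
    change _ = t.app _ ≫ Tl.map (transpLift Tl Tr t w n)
    rw [← distIter_comp_transIter n, Tl.map_comp, ← Category.assoc]
    rfl

theorem map_coface_comp_transpLift {ul : 𝟭 M ⟶ Tl}
    (ht₄ : ∀ X : M, Tr.map (ul.app X) ≫ t.app X = ul.app (Tr.obj X)) :
    ∀ n k, k ≤ n → Tr.map (coface Tl ul X n k) ≫ transpLift Tl Tr t w (n + 1) =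
      transpLift Tl Tr t w n ≫ coface Tl ul X (n + 1) k
  | n, 0, _ => by
    rw [coface_zero, coface_zero]
    exact distLaw_map_unit_comp ht₄ _
  | n + 1, k + 1, hk =>
    NatTrans.map_map_app_comp_map_of_comp_eq t (map_coface_comp_transpLift ht₄ n k (by omega))

theorem map_codeg_comp_transpLift {ml : Tl ⋙ Tl ⟶ Tl}
    (ht₂ : ∀ X : M, Tr.map (ml.app X) ≫ t.app X =
      t.app (Tl.obj X) ≫ Tl.map (t.app X) ≫ ml.app (Tr.obj X)) :
    ∀ n k, k ≤ n → Tr.map (codeg Tl ml X n k) ≫ transpLift Tl Tr t w (n + 1) =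
      transpLift Tl Tr t w (n + 2) ≫ codeg Tl ml X (n + 1) k
  | n, 0, _ => by
    rw [codeg_zero, codeg_zero]
    exact distLaw_map_mul_comp ht₂ _
  | n + 1, k + 1, hk =>
    NatTrans.map_map_app_comp_map_of_comp_eq t (map_codeg_comp_transpLift ht₂ n k (by omega))

theorem unit_app_comp_transpLift {ul : 𝟭 M ⟶ Tl} {ur : 𝟭 M ⟶ Tr}
    (ht₃ : ∀ X : M, ur.app (Tl.obj X) ≫ t.app X = Tl.map (ur.app X))
    (hw₁ : ur.app X ≫ w = ul.app X) :
    ∀ n, ur.app (fpow Tl n X) ≫ transpLift Tl Tr t w n = coface Tl ul X n n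
  | 0 => hw₁
  | n + 1 => (distLaw_unit_comp ht₃ _).trans
      (congrArg Tl.map (unit_app_comp_transpLift ht₃ hw₁ n))

theorem mul_app_comp_transpLift {ml : Tl ⋙ Tl ⟶ Tl} {mr : Tr ⋙ Tr ⟶ Tr}
    (ht₁ : ∀ X : M, mr.app (Tl.obj X) ≫ t.app X =
      Tr.map (t.app X) ≫ t.app (Tr.obj X) ≫ Tl.map (mr.app X))
    (hw₂ : mr.app X ≫ w = Tr.map w ≫ t.app X ≫ Tl.map w ≫ ml.app X) :
    ∀ n, mr.app (fpow Tl n X) ≫ transpLift Tl Tr t w n =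
      Tr.map (transpLift Tl Tr t w n) ≫ transpLift Tl Tr t w (n + 1) ≫ codeg Tl ml X n n
  | 0 => hw₂.trans (whisker_eq _ (Category.assoc _ _ _).symm)
  | n + 1 => distLaw_mul_comp ht₁ (mul_app_comp_transpLift ht₁ hw₂ n)

end DistributiveLaw

section ParaCocyclic

variable {Tl Tr : M ⥤ M} {t : Tl ⋙ Tr ⟶ Tr ⋙ Tl} {P : M ⥤ C} {i : Tl ⋙ P ⟶ Tr ⋙ P}

theorem admissible_map_unit_comp {ul : 𝟭 M ⟶ Tl} {ur : 𝟭 M ⟶ Tr}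
    (hi₁ : ∀ X : M, P.map (ul.app X) ≫ i.app X = P.map (ur.app X)) {A Z : M}
    (W : Tr.obj A ⟶ Z) : P.map (ul.app A) ≫ i.app A ≫ P.map W = P.map (ur.app A ≫ W) := by
  rw [← Category.assoc, hi₁, P.map_comp]

theorem admissible_map_mul_comp {ml : Tl ⋙ Tl ⟶ Tl} {mr : Tr ⋙ Tr ⟶ Tr}
    (hi₂ : ∀ X : M, P.map (ml.app X) ≫ i.app X =
      i.app (Tl.obj X) ≫ P.map (t.app X) ≫ i.app (Tr.obj X) ≫ P.map (mr.app X))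
    {A : M} {W : Tr.obj A ⟶ Tl.obj A} {c : Tl.obj (Tl.obj A) ⟶ Tl.obj A}
    (h : mr.app A ≫ W = Tr.map W ≫ (t.app A ≫ Tl.map W) ≫ c) :
    P.map (ml.app A) ≫ i.app A ≫ P.map W =
      (i.app (Tl.obj A) ≫ P.map (t.app A ≫ Tl.map W)) ≫
        (i.app (Tl.obj A) ≫ P.map (t.app A ≫ Tl.map W)) ≫ P.map c := by
  have := i.naturality_assoc W (P.map (t.app A) ≫ P.map (Tl.map W) ≫ P.map c)
  simp only [Functor.comp_map] at this
  rw [← Category.assoc, hi₂, Category.assoc, Category.assoc, Category.assoc, ← P.map_comp, h]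
  simp only [Functor.map_comp, Category.assoc]
  rw [← this]

variable {X : M} {w : Tr.obj X ⟶ Tl.obj X}

theorem paraOp_eq (n : ℕ) :
    paraOp Tl Tr t P i w n = i.app (fpow Tl n X) ≫ P.map (transpLift Tl Tr t w n) :=
  congrArg (fun f => i.app (fpow Tl n X) ≫ P.map f) (distIter_comp_transIter n)

theorem map_coface_succ_comp_paraOp {ul : 𝟭 M ⟶ Tl}
    (ht₄ : ∀ X : M, Tr.map (ul.app X) ≫ t.app X = ul.app (Tr.obj X)) {n k : ℕ} (hk : k ≤ n) :
    P.map (coface Tl ul X (n + 1) (k + 1)) ≫ paraOp Tl Tr t P i w (n + 1) =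
      paraOp Tl Tr t P i w n ≫ P.map (coface Tl ul X (n + 1) k) := by
  rw [paraOp_eq, paraOp_eq]
  exact NatTrans.map_map_app_comp_map_of_comp_eq i (map_coface_comp_transpLift ht₄ n k hk)

theorem map_coface_zero_comp_paraOp {ul : 𝟭 M ⟶ Tl} {ur : 𝟭 M ⟶ Tr}
    (ht₃ : ∀ X : M, ur.app (Tl.obj X) ≫ t.app X = Tl.map (ur.app X))
    (hi₁ : ∀ X : M, P.map (ul.app X) ≫ i.app X = P.map (ur.app X))
    (hw₁ : ur.app X ≫ w = ul.app X) (n : ℕ) :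
    P.map (coface Tl ul X n 0) ≫ paraOp Tl Tr t P i w n = P.map (coface Tl ul X n n) := by
  rw [coface_zero, paraOp_eq]
  exact (admissible_map_unit_comp hi₁ _).trans
    (congrArg P.map (unit_app_comp_transpLift ht₃ hw₁ n))

theorem map_codeg_succ_comp_paraOp {ml : Tl ⋙ Tl ⟶ Tl}
    (ht₂ : ∀ X : M, Tr.map (ml.app X) ≫ t.app X =
      t.app (Tl.obj X) ≫ Tl.map (t.app X) ≫ ml.app (Tr.obj X)) {n k : ℕ} (hk : k < n) :
    P.map (codeg Tl ml X n (k + 1)) ≫ paraOp Tl Tr t P i w n =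
      paraOp Tl Tr t P i w (n + 1) ≫ P.map (codeg Tl ml X n k) := by
  obtain ⟨n, rfl⟩ : ∃ m, n = m + 1 := ⟨n - 1, by omega⟩
  rw [paraOp_eq, paraOp_eq]
  exact NatTrans.map_map_app_comp_map_of_comp_eq i (map_codeg_comp_transpLift ht₂ n k (by omega))

theorem map_codeg_zero_comp_paraOp {ml : Tl ⋙ Tl ⟶ Tl} {mr : Tr ⋙ Tr ⟶ Tr}
    (ht₁ : ∀ X : M, mr.app (Tl.obj X) ≫ t.app X =
      Tr.map (t.app X) ≫ t.app (Tr.obj X) ≫ Tl.map (mr.app X))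
    (hi₂ : ∀ X : M, P.map (ml.app X) ≫ i.app X =
      i.app (Tl.obj X) ≫ P.map (t.app X) ≫ i.app (Tr.obj X) ≫ P.map (mr.app X))
    (hw₂ : mr.app X ≫ w = Tr.map w ≫ t.app X ≫ Tl.map w ≫ ml.app X) (n : ℕ) :
    P.map (codeg Tl ml X n 0) ≫ paraOp Tl Tr t P i w n =
      paraOp Tl Tr t P i w (n + 1) ≫ paraOp Tl Tr t P i w (n + 1) ≫ P.map (codeg Tl ml X n n) := by
  rw [codeg_zero, paraOp_eq, paraOp_eq]
  exact admissible_map_mul_comp hi₂ (mul_app_comp_transpLift ht₁ hw₂ n)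

end ParaCocyclic

section Iterates

variable {A B : C}

theorem iterComp_add (g : A ⟶ A) (a b : ℕ) :
    iterComp g (a + b) = iterComp g a ≫ iterComp g b := by
  induction a with
  | zero => rw [Nat.zero_add, iterComp, Category.id_comp]
  | succ a ih => rw [Nat.succ_add, iterComp, iterComp, ih, Category.assoc]

theorem iterComp_comp_of_comp_eq {g : A ⟶ A} {h : B ⟶ B} {p : A ⟶ B} (hp : g ≫ p = p ≫ h) :
    ∀ m, iterComp g m ≫ p = p ≫ iterComp h m
  | 0 => by rw [iterComp, iterComp, Category.id_comp, Category.comp_id]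
  | m + 1 => by
    rw [iterComp, iterComp, Category.assoc, iterComp_comp_of_comp_eq hp m, ← Category.assoc, hp,
      Category.assoc]

theorem iterComp_comm (g : A ⟶ A) (m : ℕ) : iterComp g m ≫ g = g ≫ iterComp g m :=
  iterComp_comp_of_comp_eq rfl m

variable {f : ℕ → (A ⟶ B)} {g : B ⟶ B} {h : A ⟶ A} {N : ℕ}

theorem comp_iterComp_of_succ_comp (hf : ∀ k < N, f (k + 1) ≫ g = h ≫ f k) :
    ∀ j k, k + j ≤ N → f (k + j) ≫ iterComp g j = iterComp h j ≫ f k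
  | 0, k, _ => by rw [iterComp, iterComp, Category.id_comp, Category.comp_id]; rfl
  | j + 1, k, hjk => by
    rw [iterComp, iterComp, ← Category.assoc, ← Nat.add_assoc, hf (k + j) (by omega),
      Category.assoc, comp_iterComp_of_succ_comp hf j k (by omega), Category.assoc]

theorem comp_iterComp_succ_of_cyclic (hf : ∀ k < N, f (k + 1) ≫ g = h ≫ f k) (e : ℕ)
    (hwrap : f 0 ≫ g = iterComp h e ≫ f N) {k : ℕ} (hk : k ≤ N) :
    f k ≫ iterComp g (N + 1) = iterComp h (N + e) ≫ f k := by
  obtain ⟨r, rfl⟩ : ∃ r, N = k + r := ⟨N - k, by omega⟩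
  have slide := comp_iterComp_of_succ_comp hf
  calc f k ≫ iterComp g (k + r + 1)
      = (f (0 + k) ≫ iterComp g k) ≫ g ≫ iterComp g r := by
        rw [Nat.zero_add, Category.assoc, ← iterComp, ← iterComp_add, Nat.add_assoc]
    _ = iterComp h k ≫ iterComp h e ≫ f (k + r) ≫ iterComp g r := by
        rw [slide k 0 (by omega), Category.assoc, ← Category.assoc (f 0), hwrap, Category.assoc]
    _ = iterComp h (k + r + e) ≫ f k := by
        rw [slide r k le_rfl, show k + r + e = k + (e + r) by omega, iterComp_add, iterComp_add,
          Category.assoc, Category.assoc]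

end Iterates

section Coequalizers

open Limits

variable {A B : C} {a : A ⟶ A} {b : B ⟶ B} [HasCoequalizer a (𝟙 A)]

noncomputable def coequalizerIdMap [HasCoequalizer b (𝟙 B)] (f : A ⟶ B) (hf : a ≫ f = f ≫ b) :
    coequalizer a (𝟙 A) ⟶ coequalizer b (𝟙 B) :=
  coequalizer.desc (f ≫ coequalizer.π b (𝟙 B)) <| by
    rw [← Category.assoc, hf, Category.assoc, coequalizer.condition, Category.id_comp,
      Category.id_comp]

theorem π_coequalizerIdMap [HasCoequalizer b (𝟙 B)] (f : A ⟶ B) (hf : a ≫ f = f ≫ b) :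
    coequalizer.π a (𝟙 A) ≫ coequalizerIdMap f hf = f ≫ coequalizer.π b (𝟙 B) :=
  coequalizer.π_desc _ _

theorem iterComp_coequalizerIdMap_self (g : A ⟶ A) (m : ℕ) [HasCoequalizer (iterComp g m) (𝟙 A)] :
    iterComp (coequalizerIdMap g (iterComp_comm g m)) m = 𝟙 _ := by
  rw [← cancel_epi (coequalizer.π _ _),
    ← iterComp_comp_of_comp_eq (π_coequalizerIdMap g (iterComp_comm g m)).symm,
    coequalizer.condition, Category.id_comp, Category.comp_id]

end Coequalizers

open Limits in
theorem cocyclic_quotient_general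
    (Tl Tr : M ⥤ M) (ml : Tl ⋙ Tl ⟶ Tl) (ul : 𝟭 M ⟶ Tl)
    (mr : Tr ⋙ Tr ⟶ Tr) (ur : 𝟭 M ⟶ Tr)
    (P : M ⥤ C) (t : Tl ⋙ Tr ⟶ Tr ⋙ Tl) (i : Tl ⋙ P ⟶ Tr ⋙ P)
    (ht₁ : ∀ X : M, mr.app (Tl.obj X) ≫ t.app X =
      Tr.map (t.app X) ≫ t.app (Tr.obj X) ≫ Tl.map (mr.app X))
    (ht₂ : ∀ X : M, Tr.map (ml.app X) ≫ t.app X =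
      t.app (Tl.obj X) ≫ Tl.map (t.app X) ≫ ml.app (Tr.obj X))
    (ht₃ : ∀ X : M, ur.app (Tl.obj X) ≫ t.app X = Tl.map (ur.app X))
    (ht₄ : ∀ X : M, Tr.map (ul.app X) ≫ t.app X = ul.app (Tr.obj X))
    (hi₁ : ∀ X : M, P.map (ul.app X) ≫ i.app X = P.map (ur.app X))
    (hi₂ : ∀ X : M, P.map (ml.app X) ≫ i.app X =
      i.app (Tl.obj X) ≫ P.map (t.app X) ≫ i.app (Tr.obj X) ≫ P.map (mr.app X))
    (X : M) (w : Tr.obj X ⟶ Tl.obj X)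
    (hw₁ : ur.app X ≫ w = ul.app X)
    (hw₂ : mr.app X ≫ w = Tr.map w ≫ t.app X ≫ Tl.map w ≫ ml.app X)
    [hcoeq : ∀ n : ℕ, HasCoequalizer (iterComp (paraOp Tl Tr t P i w n) (n + 1))
      (𝟙 (P.obj (fpow Tl (n + 1) X)))] :
    -- the cofaces commute with the powers of the para-cocyclic operators
    (∀ n k : ℕ, k ≤ n →
      P.map (coface Tl ul X (n + 1) k) ≫ iterComp (paraOp Tl Tr t P i w (n + 1)) (n + 2) =
        iterComp (paraOp Tl Tr t P i w n) (n + 1) ≫ P.map (coface Tl ul X (n + 1) k)) ∧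
    -- the codegeneracies commute with the powers of the para-cocyclic operators
    (∀ n k : ℕ, k ≤ n →
      P.map (codeg Tl ml X n k) ≫ iterComp (paraOp Tl Tr t P i w n) (n + 1) =
        iterComp (paraOp Tl Tr t P i w (n + 1)) (n + 2) ≫ P.map (codeg Tl ml X n k)) ∧
    -- the induced cocyclic structure on the coequalizers
    (∃ (dh : ∀ n k : ℕ,
        coequalizer (iterComp (paraOp Tl Tr t P i w n) (n + 1))
            (𝟙 (P.obj (fpow Tl (n + 1) X))) ⟶
          coequalizer (iterComp (paraOp Tl Tr t P i w (n + 1)) (n + 2))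
            (𝟙 (P.obj (fpow Tl (n + 2) X))))
      (sh : ∀ n k : ℕ,
        coequalizer (iterComp (paraOp Tl Tr t P i w (n + 1)) (n + 2))
            (𝟙 (P.obj (fpow Tl (n + 2) X))) ⟶
          coequalizer (iterComp (paraOp Tl Tr t P i w n) (n + 1))
            (𝟙 (P.obj (fpow Tl (n + 1) X))))
      (wh : ∀ n : ℕ,
        coequalizer (iterComp (paraOp Tl Tr t P i w n) (n + 1))
            (𝟙 (P.obj (fpow Tl (n + 1) X))) ⟶
          coequalizer (iterComp (paraOp Tl Tr t P i w n) (n + 1))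
            (𝟙 (P.obj (fpow Tl (n + 1) X)))),
      (∀ n k : ℕ, k ≤ n + 1 →
        P.map (coface Tl ul X (n + 1) k) ≫ coequalizer.π _ _ = coequalizer.π _ _ ≫ dh n k) ∧
      (∀ n k : ℕ, k ≤ n →
        P.map (codeg Tl ml X n k) ≫ coequalizer.π _ _ = coequalizer.π _ _ ≫ sh n k) ∧
      (∀ n : ℕ, paraOp Tl Tr t P i w n ≫ coequalizer.π _ _ = coequalizer.π _ _ ≫ wh n) ∧
      (∀ n : ℕ, iterComp (wh n) (n + 1) = 𝟙 _)) := by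
  have hd : ∀ n k, k ≤ n + 1 →
      P.map (coface Tl ul X (n + 1) k) ≫ iterComp (paraOp Tl Tr t P i w (n + 1)) (n + 2) =
        iterComp (paraOp Tl Tr t P i w n) (n + 1) ≫ P.map (coface Tl ul X (n + 1) k) :=
    fun n _ hk => comp_iterComp_succ_of_cyclic
      (f := fun k => P.map (coface Tl ul X (n + 1) k))
      (fun _ hk => map_coface_succ_comp_paraOp ht₄ (Nat.lt_succ_iff.mp hk)) 0
      ((map_coface_zero_comp_paraOp ht₃ hi₁ hw₁ (n + 1)).trans (Category.id_comp _).symm) hk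
  have hs : ∀ n k, k ≤ n →
      P.map (codeg Tl ml X n k) ≫ iterComp (paraOp Tl Tr t P i w n) (n + 1) =
        iterComp (paraOp Tl Tr t P i w (n + 1)) (n + 2) ≫ P.map (codeg Tl ml X n k) :=
    fun n _ hk => comp_iterComp_succ_of_cyclic
      (f := fun k => P.map (codeg Tl ml X n k))
      (fun _ hk => map_codeg_succ_comp_paraOp ht₂ hk) 2
      ((map_codeg_zero_comp_paraOp ht₁ hi₂ hw₂ n).trans (by simp only [iterComp,
        Category.comp_id, Category.assoc])) hk
  -- `dh n k` and `sh n k` are only constrained for `k` in range; outside it the index is clamped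
  refine ⟨fun n k hk => hd n k (by omega), hs,
    fun n k => coequalizerIdMap _ (hd n (min k (n + 1)) (min_le_right _ _)).symm,
    fun n k => coequalizerIdMap _ (hs n (min k n) (min_le_right _ _)).symm,
    fun n => coequalizerIdMap _ (iterComp_comm _ _),
    fun n k hk => by rw [π_coequalizerIdMap, min_eq_left hk],
    fun n k hk => by rw [π_coequalizerIdMap, min_eq_left hk],
    fun n => (π_coequalizerIdMap _ _).symm, fun n => iterComp_coequalizerIdMap_self _ _⟩

open Limits in
theorem cocyclic_quotient
    (Tl Tr : M ⥤ M) (ml : Tl ⋙ Tl ⟶ Tl) (ul : 𝟭 M ⟶ Tl)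
    (mr : Tr ⋙ Tr ⟶ Tr) (ur : 𝟭 M ⟶ Tr)
    (P : M ⥤ C) (t : Tl ⋙ Tr ⟶ Tr ⋙ Tl) (i : Tl ⋙ P ⟶ Tr ⋙ P)
    (hml : ∀ X : M, Tl.map (ml.app X) ≫ ml.app X = ml.app (Tl.obj X) ≫ ml.app X)
    (hul₁ : ∀ X : M, ul.app (Tl.obj X) ≫ ml.app X = 𝟙 (Tl.obj X))
    (hul₂ : ∀ X : M, Tl.map (ul.app X) ≫ ml.app X = 𝟙 (Tl.obj X))
    (hmr : ∀ X : M, Tr.map (mr.app X) ≫ mr.app X = mr.app (Tr.obj X) ≫ mr.app X)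
    (hur₁ : ∀ X : M, ur.app (Tr.obj X) ≫ mr.app X = 𝟙 (Tr.obj X))
    (hur₂ : ∀ X : M, Tr.map (ur.app X) ≫ mr.app X = 𝟙 (Tr.obj X))
    (ht₁ : ∀ X : M, mr.app (Tl.obj X) ≫ t.app X =
      Tr.map (t.app X) ≫ t.app (Tr.obj X) ≫ Tl.map (mr.app X))
    (ht₂ : ∀ X : M, Tr.map (ml.app X) ≫ t.app X =
      t.app (Tl.obj X) ≫ Tl.map (t.app X) ≫ ml.app (Tr.obj X))
    (ht₃ : ∀ X : M, ur.app (Tl.obj X) ≫ t.app X = Tl.map (ur.app X))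
    (ht₄ : ∀ X : M, Tr.map (ul.app X) ≫ t.app X = ul.app (Tr.obj X))
    (hi₁ : ∀ X : M, P.map (ul.app X) ≫ i.app X = P.map (ur.app X))
    (hi₂ : ∀ X : M, P.map (ml.app X) ≫ i.app X =
      i.app (Tl.obj X) ≫ P.map (t.app X) ≫ i.app (Tr.obj X) ≫ P.map (mr.app X))
    (X : M) (w : Tr.obj X ⟶ Tl.obj X)
    (hw₁ : ur.app X ≫ w = ul.app X)
    (hw₂ : mr.app X ≫ w = Tr.map w ≫ t.app X ≫ Tl.map w ≫ ml.app X)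
    [hcoeq : ∀ n : ℕ, HasCoequalizer (iterComp (paraOp Tl Tr t P i w n) (n + 1))
      (𝟙 (P.obj (fpow Tl (n + 1) X)))] :
    -- the cofaces commute with the powers of the para-cocyclic operators
    (∀ n k : ℕ, k ≤ n →
      P.map (coface Tl ul X (n + 1) k) ≫ iterComp (paraOp Tl Tr t P i w (n + 1)) (n + 2) =
        iterComp (paraOp Tl Tr t P i w n) (n + 1) ≫ P.map (coface Tl ul X (n + 1) k)) ∧
    -- the codegeneracies commute with the powers of the para-cocyclic operators
    (∀ n k : ℕ, k ≤ n →
      P.map (codeg Tl ml X n k) ≫ iterComp (paraOp Tl Tr t P i w n) (n + 1) =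
        iterComp (paraOp Tl Tr t P i w (n + 1)) (n + 2) ≫ P.map (codeg Tl ml X n k)) ∧
    -- the induced cocyclic structure on the coequalizers
    (∃ (dh : ∀ n k : ℕ,
        coequalizer (iterComp (paraOp Tl Tr t P i w n) (n + 1))
            (𝟙 (P.obj (fpow Tl (n + 1) X))) ⟶
          coequalizer (iterComp (paraOp Tl Tr t P i w (n + 1)) (n + 2))
            (𝟙 (P.obj (fpow Tl (n + 2) X))))
      (sh : ∀ n k : ℕ,
        coequalizer (iterComp (paraOp Tl Tr t P i w (n + 1)) (n + 2))
            (𝟙 (P.obj (fpow Tl (n + 2) X))) ⟶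
          coequalizer (iterComp (paraOp Tl Tr t P i w n) (n + 1))
            (𝟙 (P.obj (fpow Tl (n + 1) X))))
      (wh : ∀ n : ℕ,
        coequalizer (iterComp (paraOp Tl Tr t P i w n) (n + 1))
            (𝟙 (P.obj (fpow Tl (n + 1) X))) ⟶
          coequalizer (iterComp (paraOp Tl Tr t P i w n) (n + 1))
            (𝟙 (P.obj (fpow Tl (n + 1) X)))),
      (∀ n k : ℕ, k ≤ n + 1 →
        P.map (coface Tl ul X (n + 1) k) ≫ coequalizer.π _ _ = coequalizer.π _ _ ≫ dh n k) ∧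
      (∀ n k : ℕ, k ≤ n →
        P.map (codeg Tl ml X n k) ≫ coequalizer.π _ _ = coequalizer.π _ _ ≫ sh n k) ∧
      (∀ n : ℕ, paraOp Tl Tr t P i w n ≫ coequalizer.π _ _ = coequalizer.π _ _ ≫ wh n) ∧
      (∀ n : ℕ, iterComp (wh n) (n + 1) = 𝟙 _)) :=
  cocyclic_quotient_general Tl Tr ml ul mr ur P t i ht₁ ht₂ ht₃ ht₄ hi₁ hi₂ X w hw₁ hw₂
    (hcoeq := hcoeq)

end Stmt5
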